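/- There exists an infinite sequence X = (x_i)_{i=1}^∞ of nonzero points in [0,1]² such that AlignGap(X,C) ≤ 6 for every admissible sequence C (so AlignGap(X) ≤ 6), while MenuGap(X) = ∞, i.e., for every real T there exists a sequence Q with MenuGap(X,Q) ≥ T. -/

import Mathlib

open scoped BigOperators ENNReal NNReal
open Filter

noncomputable section

namespace Stmt1

/-- Valuation / allocation vectors over `k` items. -/
abbrev V (k : ℕ) := Fin k → ℝ

/-- Dot product. -/
def dot {k : ℕ} (x y : V k) : ℝ := ∑ t, x t * y t

/-- ℓ¹ norm. -/
def norm1 {k : ℕ} (x : V k) : ℝ := ∑ t, |x t|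

/-- Sum of a (possibly divergent) series, as limsup of partial sums in `EReal`. -/
def eseries (f : ℕ → ℝ) : EReal :=
  Filter.limsup (fun n => ((∑ i ∈ Finset.range n, f i : ℝ) : EReal)) Filter.atTop

/-- Valid index set of a sequence of length `N` (finite or `⊤`), indices starting at 1. -/
def idx (N : ℕ∞) : Set ℕ := {i | 1 ≤ i ∧ (i : ℕ∞) ≤ N}

/-- `gap_i^{X,Q} := min_{0 ≤ j < i} (q_i - q_j)·x_i`. -/
def gapS {k : ℕ} (S : Set ℕ) (X Q : ℕ → V k) (i : ℕ) : ℝ :=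
  sInf {y | ∃ j : ℕ, (j ∈ S ∨ j = 0) ∧ j < i ∧ y = dot (Q i - Q j) (X i)}

/-- `MenuGap(X,Q) := ∑_i gap_i^{X,Q}/‖x_i‖₁`. -/
def menuGapS {k : ℕ} (S : Set ℕ) (X Q : ℕ → V k) : EReal :=
  eseries (S.indicator fun i => gapS S X Q i / norm1 (X i))

/-- An admissible allocation sequence: `q_0 = 0` and all `q_i ∈ [0,1]^k`. -/
def admissibleQ {k : ℕ} (Q : ℕ → V k) : Prop :=
  Q 0 = 0 ∧ ∀ i t, Q i t ∈ Set.Icc (0:ℝ) 1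

/-- `sgap_i^{X,C} := min_{0 ≤ j < i} x_i·(c_i x_i − c_j x_j)` (with `c_0 = 0`,
so the `j = 0` term encodes `x_0 := 0`). -/
def sgapS {k : ℕ} (S : Set ℕ) (X : ℕ → V k) (c : ℕ → ℝ) (i : ℕ) : ℝ :=
  sInf {y | ∃ j : ℕ, (j ∈ S ∨ j = 0) ∧ j < i ∧ y = dot (X i) (c i • X i - c j • X j)}

/-- `AlignGap(X,C) := ∑_i max{0, sgap_i^{X,C}}/‖x_i‖₁`, as a sum of nonnegative terms
in `ℝ≥0∞`. -/
def alignGapE {k : ℕ} (S : Set ℕ) (X : ℕ → V k) (c : ℕ → ℝ) : ℝ≥0∞ :=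
  ∑' i : ℕ, S.indicator (fun i => ENNReal.ofReal (max 0 (sgapS S X c i) / norm1 (X i))) i

/-- An admissible scalar sequence: `c_0 = 0` and `c_i ∈ [0, 1/‖x_i‖_∞]` for valid `i`
(`‖·‖` is the sup norm on `Fin k → ℝ`). -/
def admissibleC {k : ℕ} (S : Set ℕ) (X : ℕ → V k) (c : ℕ → ℝ) : Prop :=
  c 0 = 0 ∧ ∀ i ∈ S, c i ∈ Set.Icc (0:ℝ) (1 / ‖X i‖)


/-!
Take `x_i = (1, τ_i)` with `0 ≤ τ_i ≤ 1`. Against any earlier index `ℓ`,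
`sgap_i ≤ φ_i - φ_ℓ + τ_ℓ²` with `φ_i = c_i (1 + τ_i²) ∈ [0, 2]`, so the positive parts of the
sgaps telescope and `AlignGap(X, C) ≤ 2 + ∑ τ_i²`.

The indices in `[128ⁿ, 128ⁿ⁺¹)` form block `n`: writing `i - 128ⁿ = r 2ⁿ + p` with `p < 2ⁿ`, put
`τ_i = 2 · 2ⁿ ε p` with `ε = 1 / (512 · 2⁶ⁿ)`, so block `n` adds at most `2⁻ⁿ⁻¹` to `∑ τ_i²`.
For the menu, give block `n` the allocations `q_i = (1/2 + (r - p²) ε, p / 2ⁿ)`, with `q = 0` before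
the block and `q = (1, 1)` after it. The allocations of a row lie on a parabola, and
`(q_i - q_j) · x_i = (r_i - r_j + (p_i - p_j)²) ε ≥ ε` for every earlier `j` of the block, so the
block alone contributes about `2ⁿ / 8` to `MenuGap`.
-/

lemma dot_sub_nonneg {k : ℕ} {q q' x : V k} (hx : ∀ t, 0 ≤ x t) (hq : ∀ t, q t ≤ q' t) :
    0 ≤ dot (q' - q) x :=
  Finset.sum_nonneg fun t _ => mul_nonneg (sub_nonneg.2 (hq t)) (hx t)

lemma dot_vec2 (a b c d : ℝ) : dot ![a, b] ![c, d] = a * c + b * d := by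
  simp [dot, Fin.sum_univ_two]

lemma norm1_one_vec (a : ℝ) : norm1 (![1, a] : V 2) = 1 + |a| := by
  simp [norm1, Fin.sum_univ_two]

lemma one_le_norm_one_vec (a : ℝ) : 1 ≤ ‖(![1, a] : V 2)‖ := by
  simpa using norm_le_pi_norm (![1, a] : V 2) 0

section Infima

variable {k : ℕ} (S : Set ℕ)

-- the infimum is over the empty set, and `sInf ∅ = 0` in `ℝ`
lemma sgapS_zero (X : ℕ → V k) (c : ℕ → ℝ) : sgapS S X c 0 = 0 := by
  simp [sgapS]

lemma sgapS_le (X : ℕ → V k) (c : ℕ → ℝ) {i j : ℕ} (hj : j ∈ S ∨ j = 0) (hji : j < i) :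
    sgapS S X c i ≤ dot (X i) (c i • X i - c j • X j) := by
  refine csInf_le (BddBelow.mono ?_ ((Set.finite_Iio i).image
    fun j => dot (X i) (c i • X i - c j • X j)).bddBelow) ⟨j, hj, hji, rfl⟩
  rintro _ ⟨j, -, hj, rfl⟩
  exact ⟨j, hj, rfl⟩

lemma le_gapS (X Q : ℕ → V k) {i : ℕ} {a : ℝ} (hi : 0 < i)
    (h : ∀ j, (j ∈ S ∨ j = 0) → j < i → a ≤ dot (Q i - Q j) (X i)) : a ≤ gapS S X Q i :=
  le_csInf ⟨_, 0, Or.inr rfl, hi, rfl⟩ fun _ ⟨j, hj, hji, hy⟩ => hy ▸ h j hj hji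

end Infima

lemma le_eseries {f : ℕ → ℝ} {T : ℝ} (h : ∀ᶠ M in atTop, T ≤ ∑ i ∈ Finset.range M, f i) :
    (T : EReal) ≤ eseries f :=
  le_limsup_of_frequently_le (h.mono fun _ hM => EReal.coe_le_coe_iff.2 hM).frequently

lemma sum_range_max_zero_le_of_telescoping {s φ d : ℕ → ℝ} {B : ℝ} (hs0 : s 0 ≤ 0)
    (hφ : ∀ i, 0 ≤ φ i ∧ φ i ≤ B) (hd : ∀ i, 0 ≤ d i)
    (hs : ∀ ℓ i, ℓ < i → s i ≤ φ i - φ ℓ + d ℓ) (M : ℕ) :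
    ∑ i ∈ Finset.range M, max 0 (s i) ≤ B + ∑ i ∈ Finset.range M, d i := by
  have hmono : ∀ {a b}, a ≤ b → ∑ i ∈ Finset.range a, d i ≤ ∑ i ∈ Finset.range b, d i :=
    fun hab => Finset.sum_le_sum_of_subset_of_nonneg (Finset.range_subset_range.2 hab)
      fun i _ _ => hd i
  -- `ℓ` is the last index with a positive `s`, or `0`
  have key : ∀ M, ∃ ℓ ≤ M,
      ∑ i ∈ Finset.range (M + 1), max 0 (s i) ≤ φ ℓ + ∑ i ∈ Finset.range ℓ, d i := by
    intro M
    induction M with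
    | zero => exact ⟨0, le_rfl, by simp [max_eq_left hs0, (hφ 0).1]⟩
    | succ M ih =>
      obtain ⟨ℓ, hℓ, hsum⟩ := ih
      rw [Finset.sum_range_succ]
      rcases le_or_gt (s (M + 1)) 0 with hneg | hpos
      · exact ⟨ℓ, hℓ.trans M.le_succ, by rw [max_eq_left hneg]; linarith⟩
      · refine ⟨M + 1, le_rfl, ?_⟩
        have hdℓ := hmono (Nat.succ_le_succ hℓ)
        rw [Finset.sum_range_succ] at hdℓ
        rw [max_eq_right hpos.le]
        linarith [hs ℓ (M + 1) (by omega)]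
  rcases M with _ | M
  · simpa using (hφ 0).1.trans (hφ 0).2
  · obtain ⟨ℓ, hℓ, hsum⟩ := key M
    linarith [(hφ ℓ).2, hmono (hℓ.trans M.le_succ)]

lemma dot_one_vec_sub_le {a b c c' : ℝ} (ha : 0 ≤ a) (hb : 0 ≤ b) (hc' : 0 ≤ c' ∧ c' ≤ 1) :
    dot ![1, a] (c • ![1, a] - c' • ![1, b]) ≤ c * (1 + a ^ 2) - c' * (1 + b ^ 2) + b ^ 2 := by
  simp only [Matrix.smul_cons, Matrix.smul_empty, Matrix.cons_sub_cons, Matrix.empty_sub_empty,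
    dot_vec2, smul_eq_mul]
  nlinarith [mul_nonneg (mul_nonneg hc'.1 ha) hb, mul_nonneg (sq_nonneg b) (sub_nonneg.2 hc'.2)]

theorem alignGapE_one_vec_le {τ : ℕ → ℝ} {D : ℝ} (hτ : ∀ i, 0 ≤ τ i ∧ τ i ≤ 1)
    (hD : ∀ M, ∑ i ∈ Finset.range M, τ i ^ 2 ≤ D) {c : ℕ → ℝ}
    (hc : admissibleC (idx ⊤) (fun i => ![1, τ i]) c) :
    alignGapE (idx ⊤) (fun i => ![1, τ i]) c ≤ ENNReal.ofReal (2 + D) := by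
  set X : ℕ → V 2 := fun i => ![1, τ i]
  have hc01 : ∀ i, 0 ≤ c i ∧ c i ≤ 1 := by
    intro i
    rcases Nat.eq_zero_or_pos i with rfl | hi
    · simp [hc.1]
    · obtain ⟨h0, h1⟩ := hc.2 i ⟨hi, le_top⟩
      exact ⟨h0, h1.trans (div_le_one_of_le₀ (one_le_norm_one_vec _) (norm_nonneg _))⟩
  have hpartial (M : ℕ) : ∑ i ∈ Finset.range M, max 0 (sgapS (idx ⊤) X c i) ≤ 2 + D := by
    refine (sum_range_max_zero_le_of_telescoping (φ := fun i => c i * (1 + τ i ^ 2))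
      (d := fun i => τ i ^ 2) (B := 2) (sgapS_zero _ _ _).le (fun i => ?_) (fun i => sq_nonneg _)
      (fun ℓ i hℓi => ?_) M).trans (by linarith [hD M])
    · obtain ⟨hc0, hc1⟩ := hc01 i
      obtain ⟨hτ0, hτ1⟩ := hτ i
      constructor <;> nlinarith
    · refine (sgapS_le _ X c ?_ hℓi).trans (dot_one_vec_sub_le (hτ i).1 (hτ ℓ).1 (hc01 ℓ))
      rcases Nat.eq_zero_or_pos ℓ with h | h
      · exact Or.inr h
      · exact Or.inl ⟨h, le_top⟩
  refine ENNReal.tsum_le_of_sum_range_le fun M => ?_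
  calc ∑ i ∈ Finset.range M, (idx ⊤).indicator
        (fun i => ENNReal.ofReal (max 0 (sgapS (idx ⊤) X c i) / norm1 (X i))) i
      ≤ ∑ i ∈ Finset.range M, ENNReal.ofReal (max 0 (sgapS (idx ⊤) X c i)) := by
        gcongr with i
        refine (Set.indicator_le_self' (fun _ _ => zero_le) i).trans
          (ENNReal.ofReal_le_ofReal (div_le_self (le_max_left _ _) ?_))
        simp [X, norm1_one_vec]
    _ = ENNReal.ofReal (∑ i ∈ Finset.range M, max 0 (sgapS (idx ⊤) X c i)) :=
        (ENNReal.ofReal_sum_of_nonneg fun i _ => le_max_left _ _).symm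
    _ ≤ ENNReal.ofReal (2 + D) := ENNReal.ofReal_le_ofReal (hpartial M)

def col (n i : ℕ) : ℕ := (i - 128 ^ n) % 2 ^ n

def row (n i : ℕ) : ℕ := (i - 128 ^ n) / 2 ^ n

def eps (n : ℕ) : ℝ := (512 * ((2 : ℝ) ^ n) ^ 6)⁻¹

def tau (i : ℕ) : ℝ := 2 * 2 ^ Nat.log 128 i * eps (Nat.log 128 i) * col (Nat.log 128 i) i

def blockSeq (i : ℕ) : V 2 := ![1, tau i]

lemma pow_128_eq (n : ℕ) : (128 : ℕ) ^ n = (2 ^ n) ^ 7 := by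
  rw [← pow_mul, mul_comm, pow_mul]; norm_num

lemma eps_pos (n : ℕ) : 0 < eps n := by unfold eps; positivity

lemma eps_mul_pow_six (n : ℕ) : eps n * ((2 : ℝ) ^ n) ^ 6 = 1 / 512 := by
  unfold eps; field_simp

lemma col_le (n i : ℕ) : (col n i : ℝ) ≤ 2 ^ n := by
  exact_mod_cast (Nat.mod_lt _ (by positivity)).le

lemma row_le {n i : ℕ} (hi : i < 128 ^ (n + 1)) : (row n i : ℝ) ≤ 128 * ((2 : ℝ) ^ n) ^ 6 := by
  have : row n i < 128 * (2 ^ n) ^ 6 := by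
    rw [row, Nat.div_lt_iff_lt_mul (by positivity)]
    have : 128 ^ (n + 1) = 128 * (2 ^ n) ^ 6 * 2 ^ n := by rw [pow_succ, pow_128_eq]; ring
    omega
  exact_mod_cast this.le

lemma tau_of_mem_block {n i : ℕ} (h₁ : 128 ^ n ≤ i) (h₂ : i < 128 ^ (n + 1)) :
    tau i = 2 * 2 ^ n * eps n * col n i := by
  rw [tau, Nat.log_eq_of_pow_le_of_lt_pow h₁ h₂]

lemma tau_nonneg (i : ℕ) : 0 ≤ tau i := by
  have := eps_pos (Nat.log 128 i)
  unfold tau; positivity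

lemma tau_le (i : ℕ) :
    tau i ≤ 2 * ((2 : ℝ) ^ Nat.log 128 i) ^ 2 * eps (Nat.log 128 i) := by
  have := eps_pos (Nat.log 128 i)
  have := col_le (Nat.log 128 i) i
  calc tau i ≤ 2 * 2 ^ Nat.log 128 i * eps (Nat.log 128 i) * 2 ^ Nat.log 128 i :=
        mul_le_mul_of_nonneg_left this (by positivity)
    _ = _ := by ring

lemma tau_le_one (i : ℕ) : tau i ≤ 1 := by
  have h1 : (1 : ℝ) ≤ 2 ^ Nat.log 128 i := one_le_pow₀ (by norm_num)
  have h2 := eps_mul_pow_six (Nat.log 128 i)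
  have h3 := eps_pos (Nat.log 128 i)
  refine (tau_le i).trans ?_
  nlinarith [pow_le_pow_right₀ h1 (show 2 ≤ 6 by norm_num)]

lemma sum_block_tau_sq_le (n : ℕ) :
    ∑ i ∈ Finset.Ico (128 ^ n) (128 ^ (n + 1)), tau i ^ 2 ≤ (1 / 2) ^ (n + 1) := by
  set m : ℝ := 2 ^ n
  have hm : 1 ≤ m := one_le_pow₀ (by norm_num)
  have hterm : ∀ i ∈ Finset.Ico (128 ^ n) (128 ^ (n + 1)), tau i ^ 2 ≤ (2 * m ^ 2 * eps n) ^ 2 := by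
    intro i hi
    rw [Finset.mem_Ico] at hi
    have := tau_le i
    rw [Nat.log_eq_of_pow_le_of_lt_pow hi.1 hi.2] at this
    exact pow_le_pow_left₀ (tau_nonneg i) this 2
  have hcard : ((Finset.Ico (128 ^ n) (128 ^ (n + 1))).card : ℝ) ≤ 128 * m ^ 7 := by
    rw [Nat.card_Ico]
    have : 128 ^ (n + 1) - 128 ^ n ≤ 128 * (2 ^ n) ^ 7 := by rw [pow_succ, pow_128_eq]; omega
    calc _ ≤ ((128 * (2 ^ n) ^ 7 : ℕ) : ℝ) := by exact_mod_cast this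
      _ = _ := by push_cast; rfl
  have hε := eps_mul_pow_six n
  calc _ ≤ (Finset.Ico (128 ^ n) (128 ^ (n + 1))).card • (2 * m ^ 2 * eps n) ^ 2 :=
        Finset.sum_le_card_nsmul _ _ _ hterm
    _ ≤ 128 * m ^ 7 * (2 * m ^ 2 * eps n) ^ 2 := by
        rw [nsmul_eq_mul]; gcongr
    _ = 1 / (512 * m) := by
        rw [show 128 * m ^ 7 * (2 * m ^ 2 * eps n) ^ 2 = 512 * (eps n * m ^ 6) ^ 2 / m by
          field_simp; ring, hε]
        field_simp
    _ ≤ 1 / (2 * m) := by gcongr; norm_num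
    _ = (1 / 2) ^ (n + 1) := by rw [one_div_pow, pow_succ, mul_comm]

lemma sum_range_pow_tau_sq_le (N : ℕ) :
    ∑ i ∈ Finset.range (128 ^ N), tau i ^ 2 ≤ 1 - (1 / 2) ^ N := by
  induction N with
  | zero => simp [tau, col]
  | succ N ih =>
    rw [Finset.range_eq_Ico, ← Finset.sum_Ico_consecutive _ (Nat.zero_le (128 ^ N))
      (Nat.pow_le_pow_right (by norm_num) N.le_succ), ← Finset.range_eq_Ico]
    have := sum_block_tau_sq_le N
    rw [pow_succ (1 / 2 : ℝ) N] at this ⊢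
    linarith

lemma sum_range_tau_sq_le (M : ℕ) : ∑ i ∈ Finset.range M, tau i ^ 2 ≤ 1 := by
  calc _ ≤ ∑ i ∈ Finset.range (128 ^ M), tau i ^ 2 :=
        Finset.sum_le_sum_of_subset_of_nonneg
          (Finset.range_subset_range.2 (Nat.lt_pow_self (by norm_num)).le) fun i _ _ => sq_nonneg _
    _ ≤ 1 - (1 / 2) ^ M := sum_range_pow_tau_sq_le M
    _ ≤ 1 := by linarith [pow_nonneg (by norm_num : (0 : ℝ) ≤ 1 / 2) M]

lemma dot_parabola_sub {m ε : ℝ} (hm : m ≠ 0) (r r' p p' : ℝ) :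
    dot (![1 / 2 + (r - p ^ 2) * ε, p / m] - ![1 / 2 + (r' - p' ^ 2) * ε, p' / m])
      ![1, 2 * m * ε * p] = (r - r' + (p - p') ^ 2) * ε := by
  rw [Matrix.cons_sub_cons, Matrix.cons_sub_cons, Matrix.empty_sub_empty, dot_vec2]
  field_simp
  ring

lemma dot_parabola {m ε : ℝ} (hm : m ≠ 0) (r p : ℝ) :
    dot ![1 / 2 + (r - p ^ 2) * ε, p / m] ![1, 2 * m * ε * p] = 1 / 2 + (r + p ^ 2) * ε := by
  rw [dot_vec2]
  field_simp
  ring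

lemma one_le_div_sub_add_sq_mod {m k k' : ℕ} (h : k' < k) :
    (1 : ℝ) ≤ ((k / m : ℕ) : ℝ) - (k' / m : ℕ) + (((k % m : ℕ) : ℝ) - (k' % m : ℕ)) ^ 2 := by
  rcases (Nat.div_le_div_right (c := m) h.le).lt_or_eq with hlt | heq
  · have : ((k' / m : ℕ) : ℝ) + 1 ≤ (k / m : ℕ) := by exact_mod_cast hlt
    nlinarith [sq_nonneg (((k % m : ℕ) : ℝ) - (k' % m : ℕ))]
  · have hmod : k' % m < k % m := by
      have := Nat.div_add_mod k m
      have := Nat.div_add_mod k' m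
      rw [heq] at *
      omega
    have : ((k' % m : ℕ) : ℝ) + 1 ≤ (k % m : ℕ) := by exact_mod_cast hmod
    rw [heq]
    nlinarith

def blockMenu (n i : ℕ) : V 2 :=
  if i < 128 ^ n then 0
  else if i < 128 ^ (n + 1) then
    ![1 / 2 + ((row n i : ℝ) - (col n i : ℝ) ^ 2) * eps n, (col n i : ℝ) / 2 ^ n]
  else 1

lemma blockMenu_mem (n i : ℕ) (t : Fin 2) : blockMenu n i t ∈ Set.Icc (0 : ℝ) 1 := by
  unfold blockMenu
  split_ifs with h₁ h₂
  · simp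
  · have hm : (1 : ℝ) ≤ 2 ^ n := one_le_pow₀ (by norm_num)
    have hε := eps_mul_pow_six n
    have := eps_pos n
    have hr := row_le h₂
    have hp := col_le n i
    have hp2 : (col n i : ℝ) ^ 2 ≤ ((2 : ℝ) ^ n) ^ 6 := by
      calc (col n i : ℝ) ^ 2 ≤ ((2 : ℝ) ^ n) ^ 2 := by gcongr
        _ ≤ _ := pow_le_pow_right₀ hm (by norm_num)
    fin_cases t
    · simp only [Fin.zero_eta, Fin.isValue, Matrix.cons_val_zero, Set.mem_Icc]
      constructor <;> nlinarith [Nat.cast_nonneg (α := ℝ) (row n i), sq_nonneg (col n i : ℝ)]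
    · simp only [Fin.mk_one, Fin.isValue, Matrix.cons_val_one, Matrix.cons_val_fin_one, Set.mem_Icc]
      exact ⟨by positivity, div_le_one_of_le₀ hp (by positivity)⟩
  · simp

lemma eps_le_dot_blockMenu {n i : ℕ} (h₁ : 128 ^ n ≤ i) (h₂ : i < 128 ^ (n + 1)) {j : ℕ}
    (hji : j < i) :
    eps n ≤ dot (blockMenu n i - blockMenu n j) (blockSeq i) := by
  have hm : (2 : ℝ) ^ n ≠ 0 := by positivity
  have hε := eps_pos n
  have hX : blockSeq i = ![1, 2 * 2 ^ n * eps n * col n i] := by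
    rw [blockSeq, tau_of_mem_block h₁ h₂]
  have hQi : blockMenu n i =
      ![1 / 2 + ((row n i : ℝ) - (col n i : ℝ) ^ 2) * eps n, (col n i : ℝ) / 2 ^ n] := by
    rw [blockMenu, if_neg (by omega), if_pos h₂]
  rw [hX, hQi]
  by_cases hj : j < 128 ^ n
  · rw [blockMenu, if_pos hj, sub_zero, dot_parabola hm]
    have : eps n ≤ 1 / 2 := by
      have := eps_mul_pow_six n
      have : (1 : ℝ) ≤ ((2 : ℝ) ^ n) ^ 6 := one_le_pow₀ (one_le_pow₀ (by norm_num))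
      nlinarith
    nlinarith [Nat.cast_nonneg (α := ℝ) (row n i), sq_nonneg (col n i : ℝ)]
  · rw [blockMenu, if_neg hj, if_pos (hji.trans h₂), dot_parabola_sub hm]
    have := one_le_div_sub_add_sq_mod (m := 2 ^ n) (show j - 128 ^ n < i - 128 ^ n by omega)
    rw [row, row, col, col]
    nlinarith

lemma blockSeq_nonneg (i : ℕ) (t : Fin 2) : 0 ≤ blockSeq i t := by
  fin_cases t
  · simp [blockSeq]
  · simpa [blockSeq] using tau_nonneg i

lemma gapS_blockMenu_nonneg (n : ℕ) {i : ℕ} (hi : 0 < i) :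
    0 ≤ gapS (idx ⊤) blockSeq (blockMenu n) i := by
  refine le_gapS _ _ _ hi fun j _ hji => ?_
  by_cases h₁ : i < 128 ^ n
  · rw [blockMenu, if_pos h₁, blockMenu, if_pos (hji.trans h₁)]
    simp [dot]
  by_cases h₂ : i < 128 ^ (n + 1)
  · exact (eps_pos n).le.trans (eps_le_dot_blockMenu (not_lt.1 h₁) h₂ hji)
  · refine dot_sub_nonneg (blockSeq_nonneg i) fun t => ?_
    have hQi : blockMenu n i = 1 := by rw [blockMenu, if_neg h₁, if_neg h₂]
    rw [hQi, Pi.one_apply]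
    exact (blockMenu_mem n j t).2

theorem menuGapS_blockSeq_unbounded (T : ℝ) :
    ∃ Q : ℕ → V 2, admissibleQ Q ∧ (T : EReal) ≤ menuGapS (idx ⊤) blockSeq Q := by
  obtain ⟨n, hn⟩ := pow_unbounded_of_one_lt (16 * T) (by norm_num : (1 : ℝ) < 2)
  have hQ : admissibleQ (blockMenu n) := ⟨by simp [blockMenu], blockMenu_mem n⟩
  refine ⟨blockMenu n, hQ, le_eseries (eventually_atTop.2 ⟨128 ^ (n + 1), fun M hM => ?_⟩)⟩
  set f := (idx ⊤).indicator fun i => gapS (idx ⊤) blockSeq (blockMenu n) i / norm1 (blockSeq i)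
  have hf : ∀ i, 0 ≤ f i := fun i => Set.indicator_nonneg (fun (i : ℕ) (hi : i ∈ idx ⊤) =>
    div_nonneg (gapS_blockMenu_nonneg n hi.1) (by rw [blockSeq, norm1_one_vec]; positivity)) i
  have hblock : ∀ i ∈ Finset.Ico (128 ^ n) (128 ^ (n + 1)), eps n / 2 ≤ f i := by
    intro i hi
    rw [Finset.mem_Ico] at hi
    have hi0 : 0 < i := lt_of_lt_of_le (by positivity) hi.1
    dsimp only [f]
    rw [Set.indicator_of_mem (show i ∈ idx ⊤ from ⟨hi0, le_top⟩), blockSeq, norm1_one_vec,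
      abs_of_nonneg (tau_nonneg i)]
    exact div_le_div₀ (gapS_blockMenu_nonneg n hi0)
      (le_gapS _ _ _ hi0 fun j _ hji => eps_le_dot_blockMenu hi.1 hi.2 hji)
      (by linarith [tau_nonneg i]) (by linarith [tau_le_one i])
  have hcard : ((Finset.Ico (128 ^ n) (128 ^ (n + 1))).card : ℝ) = 127 * ((2 : ℝ) ^ n) ^ 7 := by
    rw [Nat.card_Ico]
    have : 128 ^ (n + 1) - 128 ^ n = 127 * (2 ^ n) ^ 7 := by rw [pow_succ, pow_128_eq]; omega
    rw [this]; push_cast; rfl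
  -- block `n` alone contributes `127 · 2ⁿ / 1024 ≥ 2ⁿ / 16`
  calc T ≤ (Finset.Ico (128 ^ n) (128 ^ (n + 1))).card • (eps n / 2) := by
        rw [nsmul_eq_mul, hcard, eps]
        field_simp
        linarith [pow_pos (by norm_num : (0 : ℝ) < 2) n]
    _ ≤ ∑ i ∈ Finset.Ico (128 ^ n) (128 ^ (n + 1)), f i := Finset.card_nsmul_le_sum _ _ _ hblock
    _ ≤ ∑ i ∈ Finset.range M, f i :=
        Finset.sum_le_sum_of_subset_of_nonneg
          (fun i hi => Finset.mem_range.2 ((Finset.mem_Ico.1 hi).2.trans_le hM)) fun i _ _ => hf i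

theorem stmt1 :
    ∃ X : ℕ → V 2,
      (∀ i ∈ idx ⊤, X i ≠ 0 ∧ ∀ t, X i t ∈ Set.Icc (0:ℝ) 1) ∧
      (∀ c : ℕ → ℝ, admissibleC (idx ⊤) X c → alignGapE (idx ⊤) X c ≤ 6) ∧
      (∀ T : ℝ, ∃ Q : ℕ → V 2, admissibleQ Q ∧ (T : EReal) ≤ menuGapS (idx ⊤) X Q) := by
  have hτ (i : ℕ) : 0 ≤ tau i ∧ tau i ≤ 1 := ⟨tau_nonneg i, tau_le_one i⟩
  refine ⟨blockSeq, fun i _ => ⟨fun h => ?_, fun t => ?_⟩, fun c hc => ?_,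
    menuGapS_blockSeq_unbounded⟩
  · simpa [blockSeq] using congrFun h 0
  · fin_cases t
    · simp [blockSeq]
    · simpa [blockSeq] using hτ i
  · calc alignGapE (idx ⊤) blockSeq c ≤ ENNReal.ofReal (2 + 1) :=
          alignGapE_one_vec_le hτ sum_range_tau_sq_le hc
      _ ≤ 6 := by norm_num

end Stmt1
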